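/- In the algebra A^! = k⟨A,B,C⟩/(BA−AC, CA−AB, AB−BC, CB−BA), for all n ∈ ℕ and {X,Y} = {B,C} one has XYⁿ = AⁿX, and XAⁿ = AⁿX if n is even while XAⁿ = AⁿY if n is odd. -/
import Mathlib


/-!
In the algebra `A^! = k⟨A,B,C⟩/(BA−AC, CA−AB, AB−BC, CB−BA)` (the quadratic dual of `FK(3)`),
for all `n ∈ ℕ` and `{X,Y} = {B,C}` one has `X Yⁿ = Aⁿ X`, and `X Aⁿ = Aⁿ X` if `n` is even,
while `X Aⁿ = Aⁿ Y` if `n` is odd.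
-/

open FreeAlgebra

/-- The defining relations of the quadratic dual `A^!` of `FK(3)`:
`BA = AC`, `CA = AB`, `AB = BC`, `CB = BA`. -/
inductive ShriekRel (k : Type) [Field k] : FreeAlgebra k (Fin 3) → FreeAlgebra k (Fin 3) → Prop
  | r1 : ShriekRel k (ι k (1 : Fin 3) * ι k (0 : Fin 3)) (ι k (0 : Fin 3) * ι k (2 : Fin 3))
  | r2 : ShriekRel k (ι k (2 : Fin 3) * ι k (0 : Fin 3)) (ι k (0 : Fin 3) * ι k (1 : Fin 3))
  | r3 : ShriekRel k (ι k (0 : Fin 3) * ι k (1 : Fin 3)) (ι k (1 : Fin 3) * ι k (2 : Fin 3))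
  | r4 : ShriekRel k (ι k (2 : Fin 3) * ι k (1 : Fin 3)) (ι k (1 : Fin 3) * ι k (0 : Fin 3))

/-- The quadratic dual `A^! = k⟨A,B,C⟩/(BA−AC, CA−AB, AB−BC, CB−BA)` of `FK(3)`. -/
abbrev AShriek (k : Type) [Field k] := RingQuot (ShriekRel k)

variable (k : Type) [Field k]

/-- The generator `A` of `A^!`. -/
noncomputable def genA : AShriek k := RingQuot.mkAlgHom k (ShriekRel k) (ι k (0 : Fin 3))
/-- The generator `B` of `A^!`. -/
noncomputable def genB : AShriek k := RingQuot.mkAlgHom k (ShriekRel k) (ι k (1 : Fin 3))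
/-- The generator `C` of `A^!`. -/
noncomputable def genC : AShriek k := RingQuot.mkAlgHom k (ShriekRel k) (ι k (2 : Fin 3))

/-- In `A^!`, for all `n ∈ ℕ` and `{X,Y} = {B,C}`, one has `X Yⁿ = Aⁿ X`, and
`X Aⁿ = Aⁿ X` if `n` is even while `X Aⁿ = Aⁿ Y` if `n` is odd. -/
theorem AShriek_identities (h2 : ringChar k ≠ 2) (h3 : ringChar k ≠ 3) :
    ∀ (X Y : AShriek k), ((X = genB k ∧ Y = genC k) ∨ (X = genC k ∧ Y = genB k)) →
      ∀ n : ℕ,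
        X * Y ^ n = genA k ^ n * X ∧
        (Even n → X * genA k ^ n = genA k ^ n * X) ∧
        (Odd n → X * genA k ^ n = genA k ^ n * Y) := by
  set a := genA k with ha
  set b := genB k with hb
  set c := genC k with hc
  have rel : ∀ x y : FreeAlgebra k (Fin 3), ShriekRel k x y →
      RingQuot.mkAlgHom k (ShriekRel k) x = RingQuot.mkAlgHom k (ShriekRel k) y :=
    fun x y h => RingQuot.mkAlgHom_rel k h
  have h1 : b * a = a * c := by
    simpa [ha, hb, hc, genA, genB, genC, map_mul] using rel _ _ (ShriekRel.r1 (k := k))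
  have h2' : c * a = a * b := by
    simpa [ha, hb, hc, genA, genB, genC, map_mul] using rel _ _ (ShriekRel.r2 (k := k))
  have h3' : a * b = b * c := by
    simpa [ha, hb, hc, genA, genB, genC, map_mul] using rel _ _ (ShriekRel.r3 (k := k))
  have h4 : c * b = b * a := by
    simpa [ha, hb, hc, genA, genB, genC, map_mul] using rel _ _ (ShriekRel.r4 (k := k))
  -- X Yⁿ = Aⁿ X
  have hbc : ∀ n : ℕ, b * c ^ n = a ^ n * b := by
    intro n
    induction n with
    | zero => simp
    | succ n ih =>
      rw [pow_succ', ← mul_assoc, ← h3', mul_assoc, ih, pow_succ', mul_assoc]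
  have hcb : ∀ n : ℕ, c * b ^ n = a ^ n * c := by
    intro n
    induction n with
    | zero => simp
    | succ n ih =>
      rw [pow_succ', ← mul_assoc, h4, h1, mul_assoc, ih, pow_succ', mul_assoc]
  -- parity lemma
  have key : ∀ n : ℕ, (b * a ^ n = a ^ n * (if Even n then b else c)) ∧
      (c * a ^ n = a ^ n * (if Even n then c else b)) := by
    intro n
    induction n with
    | zero => simp
    | succ n ih =>
      obtain ⟨ihb, ihc⟩ := ih
      constructor
      · rw [pow_succ', ← mul_assoc, h1, mul_assoc, ihc, ← mul_assoc, ← pow_succ']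
        by_cases h : Even n
        · simp [h, Nat.even_add_one, h]
        · simp [h, Nat.even_add_one]
      · rw [pow_succ', ← mul_assoc, h2', mul_assoc, ihb, ← mul_assoc, ← pow_succ']
        by_cases h : Even n
        · simp [h, Nat.even_add_one, h]
        · simp [h, Nat.even_add_one]
  rintro X Y (⟨rfl, rfl⟩ | ⟨rfl, rfl⟩) n
  · refine ⟨hbc n, fun he => ?_, fun ho => ?_⟩
    · rw [(key n).1, if_pos he]
    · rw [(key n).1, if_neg (Nat.not_even_iff_odd.mpr ho)]
  · refine ⟨hcb n, fun he => ?_, fun ho => ?_⟩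
    · rw [(key n).2, if_pos he]
    · rw [(key n).2, if_neg (Nat.not_even_iff_odd.mpr ho)]
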